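/- arXiv:1803.01673 — 3 statements merged into one kernel-verified Lean document; each statement's English description precedes it below -/
import Mathlib

section
/- Let g(x) = Σ_{l=0}^m c_l (x−a)^l be a polynomial of degree m ≥ 2 on [a,b], and for n > m let w_{n,k} be its Bernstein coordinates in degree n. Then for all 0 ≤ k ≤ n, |g(a + (k/n)(b−a)) − w_{n,k}| ≤ m³ · c_max · max{(b−a)², (b−a)^m} / n, where c_max = max_{2≤l≤m} |c_l|. -/
noncomputable def bern (a b : ℝ) (n k : ℕ) (x : ℝ) : ℝ :=
  (n.choose k : ℝ) * (x - a) ^ k * (b - x) ^ (n - k) / (b - a) ^ n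

lemma keycomb (n l : ℕ) (hl : l ≤ n) (y z : ℝ) :
    ∑ k ∈ Finset.range (n + 1), (k.choose l : ℝ) * (n.choose k : ℝ) * y ^ k * z ^ (n - k)
      = (n.choose l : ℝ) * y ^ l * (y + z) ^ (n - l) := by
  have hsplit : n + 1 = l + (n - l + 1) := by omega
  rw [hsplit, Finset.sum_range_add]
  have h1 : ∑ i ∈ Finset.range l, (i.choose l : ℝ) * (n.choose i : ℝ) * y ^ i * z ^ (n - i) = 0 := by
    apply Finset.sum_eq_zero
    intro i hi
    rw [Nat.choose_eq_zero_of_lt (Finset.mem_range.mp hi)]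
    simp
  rw [h1, zero_add]
  rw [add_pow]
  rw [mul_assoc, Finset.mul_sum]
  rw [Finset.mul_sum]
  apply Finset.sum_congr rfl
  intro j hj
  have hj' : j ≤ n - l := by simpa using Nat.lt_succ_iff.mp (Finset.mem_range.mp hj)
  have hc : (n.choose (l + j) : ℝ) * ((l + j).choose l : ℝ) = (n.choose l : ℝ) * ((n - l).choose j : ℝ) := by
    rw [← Nat.cast_mul, ← Nat.cast_mul, Nat.choose_mul (n := n) (k := l + j) (s := l) (by omega), Nat.add_sub_cancel_left]
  have hy : y ^ (l + j) = y ^ l * y ^ j := pow_add y l j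
  have hnlj : n - (l + j) = n - l - j := by omega
  rw [hnlj, hy]
  linear_combination y ^ l * y ^ j * z ^ (n - l - j) * hc

lemma monomial_bern (a b : ℝ) (hab : a < b) (n l : ℕ) (hl : l ≤ n) (x : ℝ) :
    ∑ k ∈ Finset.range (n + 1), ((k.choose l : ℝ) / (n.choose l : ℝ)) * bern a b n k x
      = ((x - a) / (b - a)) ^ l := by
  have hd : (0:ℝ) < b - a := by linarith
  have hcn : (0:ℝ) < (n.choose l : ℝ) := by
    exact_mod_cast Nat.choose_pos hl
  have key := keycomb n l hl (x - a) (b - x)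
  have hyz : (x - a) + (b - x) = b - a := by ring
  rw [hyz] at key
  unfold bern
  have : ∑ k ∈ Finset.range (n + 1), ((k.choose l : ℝ) / (n.choose l : ℝ)) *
      ((n.choose k : ℝ) * (x - a) ^ k * (b - x) ^ (n - k) / (b - a) ^ n)
      = (∑ k ∈ Finset.range (n + 1), (k.choose l : ℝ) * (n.choose k : ℝ) * (x - a) ^ k * (b - x) ^ (n - k))
        / ((n.choose l : ℝ) * (b - a) ^ n) := by
    rw [Finset.sum_div]
    apply Finset.sum_congr rfl
    intro k _
    field_simp
  rw [this, key]
  rw [div_pow]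
  have hn : n = l + (n - l) := by omega
  have hba : (b - a) ^ n = (b - a) ^ l * (b - a) ^ (n - l) := by
    rw [← pow_add]
    congr 1
  rw [hba]
  field_simp

lemma bern_indep (a b : ℝ) (hab : a < b) (n : ℕ) (d : ℕ → ℝ)
    (h : ∀ x, ∑ k ∈ Finset.range (n + 1), d k * bern a b n k x = 0) :
    ∀ k ≤ n, d k = 0 := by
  set P : Polynomial ℝ := ∑ k ∈ Finset.range (n + 1),
      Polynomial.C (d k * (n.choose k : ℝ)) * Polynomial.X ^ k with hP
  have hroot : ∀ t : ℝ, -1 < t → P.eval t = 0 := by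
    intro t ht
    have h1t : (0:ℝ) < 1 + t := by linarith
    have hd : (0:ℝ) < b - a := by linarith
    set x := b - (b - a) / (1 + t) with hx
    have hbx : b - x = (b - a) / (1 + t) := by rw [hx]; ring
    have hxa : x - a = (b - a) * t / (1 + t) := by rw [hx]; field_simp; ring
    have hb : ∀ k ∈ Finset.range (n + 1),
        d k * bern a b n k x = (d k * (n.choose k : ℝ)) * t ^ k / (1 + t) ^ n := by
      intro k hk
      have hkn : k ≤ n := Nat.lt_succ_iff.mp (Finset.mem_range.mp hk)
      unfold bern
      rw [hbx, hxa]
      have h1 : (1 + t) ^ k * (1 + t) ^ (n - k) = (1 + t) ^ n := by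
        rw [← pow_add]; congr 1; omega
      have h2 : (b - a) ^ k * (b - a) ^ (n - k) = (b - a) ^ n := by
        rw [← pow_add]; congr 1; omega
      have key : ((b - a) * t / (1 + t)) ^ k * ((b - a) / (1 + t)) ^ (n - k)
          = (b - a) ^ n * t ^ k / (1 + t) ^ n := by
        rw [div_pow, div_pow, mul_pow, div_mul_div_comm, h1, ← h2]; ring
      rw [mul_assoc ((n.choose k : ℝ)), key]
      field_simp
    have := h x
    rw [Finset.sum_congr rfl hb] at this
    have hsum : ∑ k ∈ Finset.range (n + 1), (d k * (n.choose k : ℝ)) * t ^ k = 0 := by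
      have hne : ((1 + t) ^ n : ℝ) ≠ 0 := by positivity
      rw [← Finset.sum_div] at this
      exact (div_eq_zero_iff.mp this).resolve_right hne
    rw [hP, Polynomial.eval_finset_sum]
    simpa using hsum
  have hP0 : P = 0 := by
    apply Polynomial.eq_zero_of_infinite_isRoot
    apply Set.Infinite.mono (s := Set.Ioi (-1 : ℝ))
    · intro t ht
      exact hroot t ht
    · exact Set.Ioi_infinite (-1)
  intro k hk
  have hco : P.coeff k = d k * (n.choose k : ℝ) := by
    rw [hP, Polynomial.finset_sum_coeff]
    rw [Finset.sum_eq_single k]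
    · rw [Polynomial.coeff_C_mul, Polynomial.coeff_X_pow]; simp
    · intro j _ hj
      rw [Polynomial.coeff_C_mul, Polynomial.coeff_X_pow]
      simp [Ne.symm hj]
    · intro hk'
      exact absurd (Finset.mem_range.mpr (Nat.lt_succ_iff.mpr hk)) hk'
  rw [hP0] at hco
  simp at hco
  rcases hco with h0 | h0
  · exact h0
  · exact absurd h0 (Nat.cast_ne_zero.mpr (Nat.choose_pos hk).ne')

lemma prod_sub_prod_le (l : ℕ) (A B : ℕ → ℝ)
    (h : ∀ i < l, 0 ≤ B i ∧ B i ≤ A i ∧ A i ≤ 1) :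
    ∏ i ∈ Finset.range l, A i - ∏ i ∈ Finset.range l, B i
      ≤ ∑ i ∈ Finset.range l, (A i - B i) := by
  induction l with
  | zero => simp
  | succ l ih =>
    have h' : ∀ i < l, 0 ≤ B i ∧ B i ≤ A i ∧ A i ≤ 1 := fun i hi => h i (by omega)
    have ihl := ih h'
    have hl := h l (by omega)
    have hBprod : 0 ≤ ∏ i ∈ Finset.range l, B i :=
      Finset.prod_nonneg (fun i hi => (h' i (Finset.mem_range.mp hi)).1)
    have hBle1 : ∏ i ∈ Finset.range l, B i ≤ 1 :=
      Finset.prod_le_one (fun i hi => (h' i (Finset.mem_range.mp hi)).1)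
        (fun i hi => ((h' i (Finset.mem_range.mp hi)).2.1.trans (h' i (Finset.mem_range.mp hi)).2.2))
    have hAprod0 : 0 ≤ ∏ i ∈ Finset.range l, A i :=
      Finset.prod_nonneg (fun i hi => le_trans (h' i (Finset.mem_range.mp hi)).1 (h' i (Finset.mem_range.mp hi)).2.1)
    have hprodle : ∏ i ∈ Finset.range l, B i ≤ ∏ i ∈ Finset.range l, A i :=
      Finset.prod_le_prod (fun i hi => (h' i (Finset.mem_range.mp hi)).1)
        (fun i hi => (h' i (Finset.mem_range.mp hi)).2.1)
    rw [Finset.prod_range_succ, Finset.prod_range_succ, Finset.sum_range_succ]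
    nlinarith [hl.1, hl.2.1, hl.2.2, hprodle]

lemma choose_ratio (n k l : ℕ) (hl : l ≤ k) (hk : k ≤ n) :
    ((k.choose l : ℝ) / (n.choose l : ℝ))
      = ∏ i ∈ Finset.range l, (((k : ℝ) - i) / ((n : ℝ) - i)) := by
  have hfk : (k.choose l : ℝ) * (l.factorial : ℝ) = (k.descFactorial l : ℝ) := by
    rw [← Nat.cast_mul, mul_comm, ← Nat.descFactorial_eq_factorial_mul_choose]
  have hfn : (n.choose l : ℝ) * (l.factorial : ℝ) = (n.descFactorial l : ℝ) := by
    rw [← Nat.cast_mul, mul_comm, ← Nat.descFactorial_eq_factorial_mul_choose]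
  have hdk : (k.descFactorial l : ℝ) = ∏ i ∈ Finset.range l, ((k : ℝ) - i) := by
    rw [Nat.descFactorial_eq_prod_range, Nat.cast_prod]
    apply Finset.prod_congr rfl
    intro i hi
    have : i ≤ k := le_trans (Nat.le_of_lt (Finset.mem_range.mp hi)) hl
    push_cast [Nat.cast_sub this]
    ring
  have hdn : (n.descFactorial l : ℝ) = ∏ i ∈ Finset.range l, ((n : ℝ) - i) := by
    rw [Nat.descFactorial_eq_prod_range, Nat.cast_prod]
    apply Finset.prod_congr rfl
    intro i hi
    have : i ≤ n := le_trans (le_trans (Nat.le_of_lt (Finset.mem_range.mp hi)) hl) hk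
    push_cast [Nat.cast_sub this]
    ring
  have hfac : (0:ℝ) < (l.factorial : ℝ) := by exact_mod_cast Nat.factorial_pos l
  have hcn : (0:ℝ) < (n.choose l : ℝ) := by exact_mod_cast Nat.choose_pos (hl.trans hk)
  rw [Finset.prod_div_distrib, ← hdk, ← hdn, ← hfk, ← hfn]
  rw [mul_div_mul_right _ _ hfac.ne']

lemma term_bound (m n k l : ℕ) (hm : 2 ≤ m) (hmn : m < n) (hk : k ≤ n)
    (hl2 : 2 ≤ l) (hlm : l ≤ m) :
    |((k : ℝ) / n) ^ l - (k.choose l : ℝ) / (n.choose l : ℝ)| ≤ (m : ℝ) ^ 2 / n := by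
  have hn0 : (0:ℝ) < n := by
    have : 0 < n := by omega
    exact_mod_cast this
  have hkn : (k:ℝ) ≤ n := by exact_mod_cast hk
  have hk0 : (0:ℝ) ≤ k := Nat.cast_nonneg k
  have hr0 : (0:ℝ) ≤ (k:ℝ)/n := by positivity
  have hr1 : (k:ℝ)/n ≤ 1 := by rw [div_le_one hn0]; exact hkn
  by_cases hkl : k < l
  · rw [Nat.choose_eq_zero_of_lt hkl]
    simp only [Nat.cast_zero, zero_div, sub_zero]
    rw [abs_of_nonneg (pow_nonneg hr0 l)]
    have h2 : ((k:ℝ)/n) ^ l ≤ ((k:ℝ)/n) ^ 2 := pow_le_pow_of_le_one hr0 hr1 hl2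
    refine h2.trans ?_
    rw [div_pow, div_le_div_iff₀ (by positivity) hn0]
    have hkm : (k:ℝ) ≤ (m:ℝ) - 1 := by
      have : k ≤ m - 1 := by omega
      have h' : (k:ℝ) ≤ ((m - 1 : ℕ) : ℝ) := by exact_mod_cast this
      have : ((m - 1 : ℕ) : ℝ) = (m:ℝ) - 1 := by
        have : 1 ≤ m := by omega
        push_cast [Nat.cast_sub this]; ring
      linarith [this ▸ h']
    have hm1 : (1:ℝ) ≤ m := by exact_mod_cast (by omega : 1 ≤ m)
    have hn1 : (1:ℝ) ≤ n := by exact_mod_cast (by omega : 1 ≤ n)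
    have h1 : (k:ℝ)^2 ≤ (m:ℝ)^2 := by nlinarith
    have hnn : (n:ℝ) ≤ (n:ℝ)^2 := by nlinarith [mul_nonneg hn0.le (by linarith : (0:ℝ) ≤ (n:ℝ)-1)]
    have h2 := mul_le_mul_of_nonneg_left hnn (sq_nonneg (m:ℝ))
    nlinarith
  · push_neg at hkl
    set A : ℕ → ℝ := fun _ => (k:ℝ)/n with hA
    set B : ℕ → ℝ := fun i => ((k:ℝ) - i)/((n:ℝ) - i) with hBdef
    have hcond : ∀ i < l, 0 ≤ B i ∧ B i ≤ A i ∧ A i ≤ 1 := by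
      intro i hi
      have hik : (i:ℝ) ≤ k := by exact_mod_cast le_trans (Nat.le_of_lt hi) hkl
      have hin : (i:ℝ) < n := by
        have : i < n := by omega
        exact_mod_cast this
      have hni : (0:ℝ) < (n:ℝ) - i := by linarith
      refine ⟨div_nonneg (by linarith) hni.le, ?_, hr1⟩
      rw [div_le_div_iff₀ hni hn0]
      nlinarith
    have hprodA : ∏ i ∈ Finset.range l, A i = ((k:ℝ)/n) ^ l := by
      simp [hA, div_pow]
    have hratio := choose_ratio n k l hkl hk
    rw [hratio]
    have hge : ∏ i ∈ Finset.range l, B i ≤ ∏ i ∈ Finset.range l, A i :=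
      Finset.prod_le_prod (fun i hi => (hcond i (Finset.mem_range.mp hi)).1)
        (fun i hi => (hcond i (Finset.mem_range.mp hi)).2.1)
    have hup := prod_sub_prod_le l A B hcond
    rw [hprodA] at hge hup
    have habs : |((k:ℝ)/n) ^ l - ∏ i ∈ Finset.range l, B i|
        = ((k:ℝ)/n) ^ l - ∏ i ∈ Finset.range l, B i := abs_of_nonneg (by linarith)
    rw [habs]
    refine hup.trans ?_
    have hterm : ∀ i ∈ Finset.range l, A i - B i ≤ ((m:ℝ) - 1)/n := by
      intro i hi
      have hil : i < l := Finset.mem_range.mp hi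
      have hik : (i:ℝ) ≤ k := by exact_mod_cast le_trans (Nat.le_of_lt hil) hkl
      have hin : (i:ℝ) < n := by
        have : i < n := by omega
        exact_mod_cast this
      have hni : (0:ℝ) < (n:ℝ) - i := by linarith
      have him : (i:ℝ) ≤ (m:ℝ) - 1 := by
        have h1 : (i:ℝ) ≤ ((m:ℕ):ℝ) - 1 → True := fun _ => trivial
        have : i ≤ m - 1 := by omega
        have h2 : (i:ℝ) ≤ ((m-1:ℕ):ℝ) := by exact_mod_cast this
        have h3 : ((m-1:ℕ):ℝ) = (m:ℝ) - 1 := by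
          have hm1 : 1 ≤ m := by omega
          push_cast [Nat.cast_sub hm1]; ring
        linarith [h3 ▸ h2]
      have step : A i - B i ≤ (i:ℝ)/n := by
        simp only [hA, hBdef]
        rw [div_sub_div _ _ hn0.ne' hni.ne', div_le_div_iff₀ (by positivity) hn0]
        nlinarith [mul_nonneg (mul_nonneg (Nat.cast_nonneg i : (0:ℝ) ≤ i) hn0.le) (sub_nonneg.mpr hik)]
      refine step.trans ?_
      gcongr
    have hsum : ∑ i ∈ Finset.range l, (A i - B i) ≤ (l:ℝ) * (((m:ℝ) - 1)/n) := by
      calc ∑ i ∈ Finset.range l, (A i - B i) ≤ ∑ _i ∈ Finset.range l, ((m:ℝ) - 1)/n :=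
            Finset.sum_le_sum hterm
        _ = (l:ℝ) * (((m:ℝ) - 1)/n) := by
            rw [Finset.sum_const, Finset.card_range, nsmul_eq_mul]
    refine hsum.trans ?_
    have hlmr : (l:ℝ) ≤ m := by exact_mod_cast hlm
    have hm1 : (1:ℝ) ≤ m := by exact_mod_cast (by omega : 1 ≤ m)
    rw [← mul_div_assoc, div_le_div_iff₀ hn0 hn0]
    have hmul : (l:ℝ) * ((m:ℝ) - 1) ≤ (m:ℝ) * (m:ℝ) :=
      mul_le_mul hlmr (by linarith) (by linarith) (by linarith)
    nlinarith

theorem stmt10 (a b : ℝ) (hab : a < b) (m n : ℕ) (hm : 2 ≤ m) (hmn : m < n)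
    (c w : ℕ → ℝ) (g : ℝ → ℝ) (hdeg : c m ≠ 0)
    (hg : ∀ x, g x = ∑ l ∈ Finset.range (m + 1), c l * (x - a) ^ l)
    (hB : ∀ x, g x = ∑ k ∈ Finset.range (n + 1), w k * bern a b n k x) :
    ∀ k, k ≤ n →
      |g (a + (k : ℝ) / n * (b - a)) - w k|
        ≤ (m : ℝ) ^ 3 * ((Finset.Icc 2 m).sup' (Finset.nonempty_Icc.mpr hm) fun l => |c l|)
            * max ((b - a) ^ 2) ((b - a) ^ m) / n := by
  have hd : (0:ℝ) < b - a := by linarith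
  have hn0 : (0:ℝ) < n := by exact_mod_cast (by omega : 0 < n)
  set v : ℕ → ℝ := fun k => ∑ l ∈ Finset.range (m + 1),
      c l * (b - a) ^ l * ((k.choose l : ℝ) / (n.choose l : ℝ)) with hvdef
  have hv : ∀ x, ∑ k ∈ Finset.range (n + 1), v k * bern a b n k x = g x := by
    intro x
    rw [hg x]
    have expand : ∀ k0 ∈ Finset.range (n + 1), v k0 * bern a b n k0 x
        = ∑ l ∈ Finset.range (m + 1),
            c l * (b - a) ^ l * ((k0.choose l : ℝ) / (n.choose l : ℝ)) * bern a b n k0 x := by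
      intro k0 _
      rw [hvdef]
      simp only
      rw [Finset.sum_mul]
    rw [Finset.sum_congr rfl expand, Finset.sum_comm]
    apply Finset.sum_congr rfl
    intro l hl
    have hln : l ≤ n := by have := Finset.mem_range.mp hl; omega
    have key : ∑ k0 ∈ Finset.range (n + 1),
        c l * (b - a) ^ l * ((k0.choose l : ℝ) / (n.choose l : ℝ)) * bern a b n k0 x
        = c l * (b - a) ^ l * ((x - a) / (b - a)) ^ l := by
      rw [← monomial_bern a b hab n l hln x, Finset.mul_sum]
      exact Finset.sum_congr rfl (fun k0 _ => by ring)
    rw [key, div_pow]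
    field_simp
  have hw : ∀ j ≤ n, w j = v j := by
    have h0 : ∀ x, ∑ k ∈ Finset.range (n + 1), (w k - v k) * bern a b n k x = 0 := by
      intro x
      simp only [sub_mul]
      rw [Finset.sum_sub_distrib, hv x, ← hB x, sub_self]
    intro j hj
    have := bern_indep a b hab n (fun k => w k - v k) h0 j hj
    simpa [sub_eq_zero] using this
  intro k hk
  rw [hw k hk]
  set r : ℝ := (k : ℝ) / n with hr
  have hnode : g (a + r * (b - a)) = ∑ l ∈ Finset.range (m + 1), c l * (b - a) ^ l * r ^ l := by
    rw [hg]
    apply Finset.sum_congr rfl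
    intro l _
    rw [show a + r * (b - a) - a = r * (b - a) by ring, mul_pow]
    ring
  rw [hnode, hvdef]
  simp only
  rw [← Finset.sum_sub_distrib]
  have hzero : ∀ l ∈ Finset.range (m + 1), l ∉ Finset.Icc 2 m →
      c l * (b - a) ^ l * r ^ l - c l * (b - a) ^ l * ((k.choose l : ℝ) / (n.choose l : ℝ)) = 0 := by
    intro l hl hl'
    have : l = 0 ∨ l = 1 := by
      have h1 := Finset.mem_range.mp hl
      have h2 : ¬ (2 ≤ l ∧ l ≤ m) := by simpa [Finset.mem_Icc] using hl'
      omega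
    rcases this with rfl | rfl
    · simp
    · simp only [Nat.choose_one_right, pow_one]
      rw [hr]
      ring
  have hsub : Finset.Icc 2 m ⊆ Finset.range (m + 1) := by
    intro l hl
    have := Finset.mem_Icc.mp hl
    exact Finset.mem_range.mpr (by omega)
  rw [← Finset.sum_subset hsub hzero]
  set cmax : ℝ := (Finset.Icc 2 m).sup' (Finset.nonempty_Icc.mpr hm) fun l => |c l| with hcm
  set M : ℝ := max ((b - a) ^ 2) ((b - a) ^ m) with hM
  have hmm : m ∈ Finset.Icc 2 m := Finset.mem_Icc.mpr ⟨hm, le_refl m⟩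
  have hcmax0 : 0 ≤ cmax := le_trans (abs_nonneg (c m)) (Finset.le_sup' (fun l => |c l|) hmm)
  have hM0 : 0 ≤ M := le_trans (by positivity) (le_max_left ((b-a)^2) ((b-a)^m))
  have hterm : ∀ l ∈ Finset.Icc 2 m,
      |c l * (b - a) ^ l * r ^ l - c l * (b - a) ^ l * ((k.choose l : ℝ) / (n.choose l : ℝ))|
        ≤ cmax * M * ((m : ℝ) ^ 2 / n) := by
    intro l hl
    obtain ⟨hl2, hlm⟩ := Finset.mem_Icc.mp hl
    have e1 : c l * (b - a) ^ l * r ^ l - c l * (b - a) ^ l * ((k.choose l : ℝ) / (n.choose l : ℝ))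
        = c l * (b - a) ^ l * (r ^ l - (k.choose l : ℝ) / (n.choose l : ℝ)) := by ring
    rw [e1, abs_mul, abs_mul]
    have hcl : |c l| ≤ cmax := Finset.le_sup' (fun l => |c l|) hl
    have hpow : |(b - a) ^ l| ≤ M := by
      rw [abs_of_nonneg (by positivity)]
      by_cases hble : b - a ≤ 1
      · exact le_trans (pow_le_pow_of_le_one hd.le hble hl2) (le_max_left _ _)
      · push_neg at hble
        exact le_trans (pow_le_pow_right₀ hble.le hlm) (le_max_right _ _)
    have htb := term_bound m n k l hm hmn hk hl2 hlm
    rw [← hr] at htb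
    have h1 : |c l| * |(b - a) ^ l| ≤ cmax * M :=
      mul_le_mul hcl hpow (abs_nonneg _) hcmax0
    exact mul_le_mul h1 htb (abs_nonneg _) (by positivity)
  calc |∑ l ∈ Finset.Icc 2 m,
          (c l * (b - a) ^ l * r ^ l - c l * (b - a) ^ l * ((k.choose l : ℝ) / (n.choose l : ℝ)))|
      ≤ ∑ l ∈ Finset.Icc 2 m,
          |c l * (b - a) ^ l * r ^ l - c l * (b - a) ^ l * ((k.choose l : ℝ) / (n.choose l : ℝ))| :=
        Finset.abs_sum_le_sum_abs _ _
    _ ≤ ∑ _l ∈ Finset.Icc 2 m, cmax * M * ((m : ℝ) ^ 2 / n) := Finset.sum_le_sum hterm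
    _ = ((m - 1 : ℕ) : ℝ) * (cmax * M * ((m : ℝ) ^ 2 / n)) := by
        rw [Finset.sum_const, nsmul_eq_mul, Nat.card_Icc]
        congr 2
    _ ≤ (m : ℝ) ^ 3 * cmax * M / n := by
        have hm1 : ((m - 1 : ℕ) : ℝ) ≤ (m : ℝ) := by exact_mod_cast (by omega : m - 1 ≤ m)
        have hm0 : (0:ℝ) ≤ (m : ℝ) := Nat.cast_nonneg m
        have key : ((m - 1 : ℕ) : ℝ) * (cmax * M * ((m : ℝ) ^ 2 / n))
            ≤ (m : ℝ) * (cmax * M * ((m : ℝ) ^ 2 / n)) := by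
          apply mul_le_mul_of_nonneg_right hm1
          positivity
        refine key.trans (le_of_eq ?_)
        field_simp
end

section
/- For f₁(x) = (x − 1/N)³ on [0,1] with N ≥ 3, the Bernstein coordinate of f₁ in degree N at index 2 equals γ_{N,2} = 5/N³ − 6/(N³ − N²), which is strictly less than f₁(0) = −1/N³; hence the node t_{N,2} = f₁^{-1}(γ_{N,2}) is strictly negative. -/
open Polynomial Finset in
lemma coeff_one_sub_X_pow (M j : ℕ) :
    ((1 - (X : ℝ[X])) ^ M).coeff j = (-1 : ℝ) ^ j * (M.choose j) := by
  by_cases h : j ≤ M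
  · have h1 : (1 - (X : ℝ[X])) ^ M = C ((-1 : ℝ) ^ M) * (X + C (-1)) ^ M := by
      rw [show (1 - (X : ℝ[X])) = (-1) * (X + C (-1)) by simp; ring, mul_pow,
        show ((-1 : ℝ[X])) = C (-1) by simp, ← C_pow]
    rw [h1, coeff_C_mul, coeff_X_add_C_pow]
    rw [← mul_assoc, ← pow_add]
    have h2 : M + (M - j) = 2 * (M - j) + j := by omega
    rw [h2, pow_add, pow_mul]
    norm_num
  · push_neg at h
    rw [Nat.choose_eq_zero_of_lt h]
    have : ((1 - (X : ℝ[X])) ^ M).natDegree < j := by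
      calc ((1 - (X : ℝ[X])) ^ M).natDegree ≤ M * (1 - (X : ℝ[X])).natDegree :=
            natDegree_pow_le
        _ ≤ M * 1 := by
            gcongr
            exact natDegree_le_iff_degree_le.2 (by
              simpa using (degree_sub_le (1 : ℝ[X]) X).trans (by simp))
        _ < j := by omega
    rw [coeff_eq_zero_of_natDegree_lt this]
    simp

open Polynomial Finset in
theorem stmt13 (N : ℕ) (hN : 3 ≤ N) (γ : ℕ → ℝ)
    (hB : ∀ x : ℝ, (x - 1 / (N : ℝ)) ^ 3 = ∑ k ∈ Finset.range (N + 1), γ k * bern 0 1 N k x) :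
    γ 2 = 5 / (N : ℝ) ^ 3 - 6 / ((N : ℝ) ^ 3 - (N : ℝ) ^ 2) ∧
      ((0 : ℝ) - 1 / (N : ℝ)) ^ 3 = -(1 / (N : ℝ) ^ 3) ∧
      γ 2 < -(1 / (N : ℝ) ^ 3) ∧
      ∀ t : ℝ, (t - 1 / (N : ℝ)) ^ 3 = γ 2 → t < 0 := by
  have hN3 : (3 : ℝ) ≤ (N : ℝ) := by exact_mod_cast hN
  have hn0 : (N : ℝ) ≠ 0 := by linarith
  have hn1 : (N : ℝ) - 1 ≠ 0 := by linarith
  set n : ℝ := (N : ℝ) with hn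
  set c : ℝ := 1 / n with hc
  -- polynomial identity
  have hPQ : ((X : ℝ[X]) + C (-c)) ^ 3
      = ∑ k ∈ range (N + 1), C (γ k * (N.choose k : ℝ)) * ((1 - X) ^ (N - k) * X ^ k) := by
    apply Polynomial.funext
    intro x
    rw [eval_finset_sum]
    have := hB x
    simp only [eval_pow, eval_add, eval_X, eval_C, eval_mul, eval_sub, eval_one]
    rw [show x + -c = x - 1 / n by rw [hc]; ring, this]
    refine Finset.sum_congr rfl fun k _ => ?_
    simp [bern]
    ring
  -- extract coefficients
  have key : ∀ m : ℕ, (-c) ^ (3 - m) * ((3).choose m : ℝ)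
      = ∑ k ∈ range (N + 1), γ k * (N.choose k : ℝ) *
          (if k ≤ m then (-1 : ℝ) ^ (m - k) * (((N - k).choose (m - k) : ℝ)) else 0) := by
    intro m
    have := congrArg (fun p : ℝ[X] => p.coeff m) hPQ
    simp only [coeff_X_add_C_pow] at this
    rw [this, finset_sum_coeff]
    refine Finset.sum_congr rfl fun k _ => ?_
    rw [coeff_C_mul, coeff_mul_X_pow']
    split_ifs with h
    · rw [coeff_one_sub_X_pow]
    · ring
  -- reduce sums
  have hsum : ∀ m : ℕ, m ≤ 2 →
      (∑ k ∈ range (N + 1), γ k * (N.choose k : ℝ) *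
          (if k ≤ m then (-1 : ℝ) ^ (m - k) * (((N - k).choose (m - k) : ℝ)) else 0))
      = ∑ k ∈ range (m + 1), γ k * (N.choose k : ℝ) *
          ((-1 : ℝ) ^ (m - k) * (((N - k).choose (m - k) : ℝ))) := by
    intro m hm
    have hsub : Finset.range (m + 1) ⊆ Finset.range (N + 1) :=
      Finset.range_subset_range.2 (by omega)
    rw [← Finset.sum_subset hsub (fun k _ hk => by
      have hkm : ¬ k ≤ m := by simp at hk; omega
      rw [if_neg hkm, mul_zero])]
    refine Finset.sum_congr rfl fun k hk => ?_
    rw [if_pos (Nat.lt_succ_iff.mp (Finset.mem_range.mp hk))]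
  have E0 := key 0
  have E1 := key 1
  have E2 := key 2
  rw [hsum 0 (by norm_num)] at E0
  rw [hsum 1 (by norm_num)] at E1
  rw [hsum 2 (by norm_num)] at E2
  simp only [Finset.sum_range_succ, Finset.sum_range_one] at E0 E1 E2
  -- simplify choose values
  have hch1 : (N.choose 1 : ℝ) = n := by simp [hn]
  have hch2 : (N.choose 2 : ℝ) = n * (n - 1) / 2 := by
    rw [Nat.cast_choose_two]
  have hsub1 : ((N - 1 : ℕ) : ℝ) = n - 1 := by
    rw [Nat.cast_sub (by omega)]; simp [hn]
  have hchN1 : (((N - 1).choose 1 : ℕ) : ℝ) = n - 1 := by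
    rw [Nat.choose_one_right, hsub1]
  norm_num [hch1, hch2, hchN1] at E0 E1 E2
  rw [← hn] at E1 E2
  rw [hsub1] at E2
  have hg0 : γ 0 = -(1 / n ^ 3) := by rw [← E0, hc]; ring
  rw [hg0, hc] at E1 E2
  have hcube : (n : ℝ) ^ 3 ≠ 0 := pow_ne_zero _ hn0
  field_simp at E1 E2
  have hnpos : (0 : ℝ) < n := by linarith
  have hdpos : (0 : ℝ) < n ^ 3 - n ^ 2 := by nlinarith [mul_pos hnpos hnpos]
  have hd : n ^ 3 - n ^ 2 ≠ 0 := ne_of_gt hdpos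
  have hg1 : γ 1 * n ^ 3 = 2 := by
    have hz : (γ 1 * n ^ 3 - 2) * n ^ 3 = 0 := by linear_combination (-n ^ 3) * E1
    rcases mul_eq_zero.mp hz with h | h
    · linarith
    · exact absurd h hcube
  have hg2 : γ 2 = 5 / n ^ 3 - 6 / (n ^ 3 - n ^ 2) := by
    rw [div_sub_div _ _ hcube hd, eq_div_iff (mul_ne_zero hcube hd)]
    linear_combination (-n ^ 2) * E2 + 2 * n ^ 2 * (n - 1) * hg1
  have hlt : γ 2 < -(1 / n ^ 3) := by
    rw [hg2]
    have hkey : (6 : ℝ) / n ^ 3 < 6 / (n ^ 3 - n ^ 2) :=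
      div_lt_div_of_pos_left (by norm_num) hdpos (by nlinarith [mul_pos hnpos hnpos])
    have h5 : (5 : ℝ) / n ^ 3 = 5 * (1 / n ^ 3) := by ring
    have h6 : (6 : ℝ) / n ^ 3 = 6 * (1 / n ^ 3) := by ring
    have h6' : (6 : ℝ) / (n ^ 3 - n ^ 2) = 6 * (1 / (n ^ 3 - n ^ 2)) := by ring
    rw [h6, h6'] at hkey
    rw [h5, h6']
    linarith
  refine ⟨hg2, by rw [hc]; ring, hlt, ?_⟩
  intro t ht
  have h1 : (t - c) ^ 3 < ((0 : ℝ) - c) ^ 3 := by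
    rw [ht]
    calc γ 2 < -(1 / n ^ 3) := hlt
      _ = ((0 : ℝ) - c) ^ 3 := by rw [hc]; ring
  have h2 := (Odd.strictMono_pow (R := ℝ) (⟨1, by norm_num⟩ : Odd 3)).lt_iff_lt.mp h1
  linarith
end

section
/- Let f₁(x) = x³ on [−1,1]. Its Bernstein coordinates in degree 4 are γ_{4,0} = −1, γ_{4,1} = 1/2, γ_{4,2} = 0, γ_{4,3} = −1/2, γ_{4,4} = 1; in particular the coordinate sequence is not monotone, so no generalized Bernstein operator on P₄[−1,1] fixing 1 and x³ can have non-decreasing nodes. -/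
theorem stmt18 (γ : ℕ → ℝ)
    (hB : ∀ x : ℝ, x ^ 3 = ∑ k ∈ Finset.range 5, γ k * bern (-1) 1 4 k x) :
    γ 0 = -1 ∧ γ 1 = 1 / 2 ∧ γ 2 = 0 ∧ γ 3 = -1 / 2 ∧ γ 4 = 1 ∧
      ¬ (∀ k, k < 4 → γ k ≤ γ (k + 1)) ∧
      ¬ ∃ t : ℕ → ℝ, (∀ k, k < 4 → t k ≤ t (k + 1)) ∧
        ∀ k, k ≤ 4 → t k ∈ Set.Icc (-1 : ℝ) 1 ∧ (t k) ^ 3 = γ k := by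
  have h1 := hB (-1)
  have h2 := hB 1
  have h3 := hB 0
  have h4 := hB (1/2)
  have h5 := hB (-1/2)
  simp [bern, Finset.sum_range_succ, Nat.choose] at h1 h2 h3 h4 h5
  norm_num at h1 h2 h3 h4 h5
  have g0 : γ 0 = -1 := by linarith
  have g4 : γ 4 = 1 := by linarith
  have g2 : γ 2 = 0 := by linarith
  have g1 : γ 1 = 1/2 := by linarith
  have g3 : γ 3 = -1/2 := by linarith
  refine ⟨g0, g1, g2, g3, g4, ?_, ?_⟩
  · intro h
    have := h 1 (by norm_num)
    rw [g1, g2] at this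
    linarith
  · rintro ⟨t, hmono, hval⟩
    have h12 : t 1 ≤ t 2 := hmono 1 (by norm_num)
    have e1 := (hval 1 (by norm_num)).2
    have e2 := (hval 2 (by norm_num)).2
    rw [g1] at e1
    rw [g2] at e2
    nlinarith [sq_nonneg (t 1 + t 2), sq_nonneg (t 1 - t 2), sq_nonneg (t 1), sq_nonneg (t 2)]
end
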